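/- (Submodularity of the energy with convex priors) Let V be a finite vertex set, Ẽ ⊆ V×V a finite edge set, E_i : ℤ → ℝ unary terms, and h : ℝ → ℝ convex. Define E(x) = Σ_{i∈V} E_i(x_i) + Σ_{(i,j)∈Ẽ} h(x_i − x_j) for x : V → ℤ. Then E is submodular on the lattice ℤ^V: for all labellings x, y : V → ℤ, E(x ∨ y) + E(x ∧ y) ≤ E(x) + E(y), where (x ∨ y)_i = max(x_i, y_i) and (x ∧ y)_i = min(x_i, y_i). -/

import Mathlib

/-!
Each summand of the energy is submodular on its own. For a unary term, `{max a b, min a b}` is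
just `{a, b}`. For a pairwise term, the differences `u = max a c - max b d` and
`v = min a c - min b d` satisfy `u + v = (a - b) + (c - d)` with `u` between `a - b` and `c - d`;
so `u` and `v` are mirror-image convex combinations of `a - b` and `c - d`, and adding the two
convexity inequalities gives `h u + h v ≤ h (a - b) + h (c - d)`.
-/

open Set Finset

theorem map_max_add_map_min {α M : Type*} [LinearOrder α] [AddCommMagma M] (f : α → M)
    (a b : α) : f (max a b) + f (min a b) = f a + f b := by
  rcases le_total a b with hab | hab
  · rw [max_eq_right hab, min_eq_left hab, add_comm]
  · rw [max_eq_left hab, min_eq_right hab]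

theorem max_sub_max_mem_Icc {α : Type*} [AddCommGroup α] [LinearOrder α] [IsOrderedAddMonoid α]
    (a b c d : α) : max a c - max b d ∈ Icc (min (a - b) (c - d)) (max (a - b) (c - d)) := by
  constructor
  · rcases le_total b d with hbd | hbd
    · rw [max_eq_right hbd]
      exact (min_le_right _ _).trans (sub_le_sub_right (le_max_right a c) d)
    · rw [max_eq_left hbd]
      exact (min_le_left _ _).trans (sub_le_sub_right (le_max_left a c) b)
  · rcases le_total a c with hac | hac
    · rw [max_eq_right hac]
      exact (sub_le_sub_left (le_max_right b d) c).trans (le_max_right _ _)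
    · rw [max_eq_left hac]
      exact (sub_le_sub_left (le_max_left b d) a).trans (le_max_left _ _)

theorem ConvexOn.map_add_map_add_sub_le_of_mem_segment {𝕜 E β : Type*} [Semiring 𝕜]
    [PartialOrder 𝕜] [AddCommGroup E] [Module 𝕜 E] [AddCommGroup β] [PartialOrder β]
    [IsOrderedAddMonoid β] [Module 𝕜 β] {s : Set E} {f : E → β} (hf : ConvexOn 𝕜 s f)
    {a b u : E} (ha : a ∈ s) (hb : b ∈ s) (hu : u ∈ segment 𝕜 a b) :
    f u + f (a + b - u) ≤ f a + f b := by
  obtain ⟨p, q, hp, hq, hpq, rfl⟩ := hu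
  have hmirror : a + b - (p • a + q • b) = q • a + p • b := by
    have hab : a + b = (p + q) • a + (p + q) • b := by rw [hpq, one_smul, one_smul]
    rw [hab, add_smul, add_smul]
    abel
  calc f (p • a + q • b) + f (a + b - (p • a + q • b))
      ≤ (p • f a + q • f b) + (q • f a + p • f b) := by
        rw [hmirror]
        exact add_le_add (hf.2 ha hb hp hq hpq) (hf.2 ha hb hq hp (by rw [add_comm, hpq]))
    _ = f a + f b := by
        rw [add_add_add_comm, ← add_smul, ← add_smul, add_comm q, hpq, one_smul, one_smul]

theorem ConvexOn.map_max_sub_max_add_map_min_sub_min_le {𝕜 β : Type*} [Field 𝕜]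
    [LinearOrder 𝕜] [IsStrictOrderedRing 𝕜] [AddCommGroup β] [PartialOrder β]
    [IsOrderedAddMonoid β] [Module 𝕜 β] {s : Set 𝕜} {f : 𝕜 → β}
    (hf : ConvexOn 𝕜 s f) {a b c d : 𝕜} (hab : a - b ∈ s) (hcd : c - d ∈ s) :
    f (max a c - max b d) + f (min a c - min b d) ≤ f (a - b) + f (c - d) := by
  have hsum : min a c - min b d = (a - b) + (c - d) - (max a c - max b d) := by
    linarith [max_add_min a c, max_add_min b d]
  rw [hsum]
  refine hf.map_add_map_add_sub_le_of_mem_segment hab hcd ?_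
  rw [segment_eq_Icc']
  exact max_sub_max_mem_Icc a b c d

/-- Submodularity of the MRF energy with convex pairwise priors: the energy
`E(x) = Σ_i E_i(x_i) + Σ_{(i,j)} h(x_i - x_j)` with `h` convex is submodular on the
lattice `ℤ^V` (componentwise max and min). -/
theorem convex_energy_submodular {V : Type*} [Fintype V]
    (Edges : Finset (V × V)) (Eu : V → ℤ → ℝ) (h : ℝ → ℝ)
    (hconv : ConvexOn ℝ Set.univ h)
    (E : (V → ℤ) → ℝ)
    (hE : ∀ x : V → ℤ,
      E x = (∑ i, Eu i (x i)) + ∑ e ∈ Edges, h (((x e.1 : ℤ) : ℝ) - ((x e.2 : ℤ) : ℝ)))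
    (x y : V → ℤ) :
    E (fun i => max (x i) (y i)) + E (fun i => min (x i) (y i)) ≤ E x + E y := by
  simp only [hE, add_add_add_comm _ (∑ e ∈ Edges, _), ← sum_add_distrib, map_max_add_map_min]
  refine add_le_add_right (sum_le_sum fun e _ => ?_) _
  push_cast
  exact hconv.map_max_sub_max_add_map_min_sub_min_le (mem_univ _) (mem_univ _)
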